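/- arXiv:1602.06735 — 2 statements merged into one kernel-verified Lean document; each statement's English description precedes it below -/
import Mathlib

section
/- Let S be an association scheme on a finite set X. For all u, v, w in S, lcm(n_u, n_v) divides a_{uvw} · n_w. -/
open Set

/-- The diagonal relation `1_X` on a set `X`. -/
def schemeDiag (X : Type*) : Set (X × X) := {p | p.1 = p.2}

/-- The transpose `s*` of a relation `s`. -/
def schemeTransp {X : Type*} (s : Set (X × X)) : Set (X × X) := {p | (p.2, p.1) ∈ s}

/-- An association scheme on a finite set `X`: a partition of `X × X` containing the
diagonal, closed under transposition, with well-defined intersection numbers `a s t u`. -/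
structure AssocScheme (X : Type*) [Fintype X] where
  rels : Set (Set (X × X))
  partition : ∀ p : X × X, ∃! s, s ∈ rels ∧ p ∈ s
  diag_mem : schemeDiag X ∈ rels
  transpose_mem : ∀ s ∈ rels, schemeTransp s ∈ rels
  a : Set (X × X) → Set (X × X) → Set (X × X) → ℕ
  a_spec : ∀ s ∈ rels, ∀ t ∈ rels, ∀ u ∈ rels, ∀ x y : X, (x, y) ∈ u →
    a s t u = Nat.card {z : X | (x, z) ∈ s ∧ (z, y) ∈ t}

namespace AssocScheme

variable {X : Type*} [Fintype X] (S : AssocScheme X)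

/-- The valency `n_s = a_{s s* 1_X}` of a relation. -/
def val (s : Set (X × X)) : ℕ := S.a s (schemeTransp s) (schemeDiag X)

/-- The complex product `uv` of two relations. -/
def cprod (u v : Set (X × X)) : Set (Set (X × X)) := {s ∈ S.rels | S.a u v s ≠ 0}

/-- The complex product `PQ` of two sets of relations. -/
def sprod (P Q : Set (Set (X × X))) : Set (Set (X × X)) :=
  {s ∈ S.rels | ∃ p ∈ P, ∃ q ∈ Q, S.a p q s ≠ 0}

/-- A (nonempty) closed subset of the scheme. -/
def IsClosedSubset (T : Set (Set (X × X))) : Prop :=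
  T.Nonempty ∧ T ⊆ S.rels ∧ ∀ u ∈ T, ∀ v ∈ T, S.cprod u v ⊆ T

/-- The thin radical `O_θ(S)`: the set of relations of valency 1. -/
def thinRadical : Set (Set (X × X)) := {s ∈ S.rels | S.val s = 1}

/-- The smallest closed subset containing all `t* t` for `t ∈ T`. -/
def resOf (T : Set (Set (X × X))) : Set (Set (X × X)) :=
  ⋂₀ {U | S.IsClosedSubset U ∧ ∀ t ∈ T, S.cprod (schemeTransp t) t ⊆ U}

/-- The thin residue `O^θ(S) = ⟨⋃_{s ∈ S} s* s⟩`. -/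
def thinResidue : Set (Set (X × X)) := S.resOf S.rels

/-- The order `n_U = ∑_{u ∈ U} n_u` of a set of relations. -/
noncomputable def nOrd (U : Set (Set (X × X))) : ℕ := ∑ᶠ u ∈ U, S.val u

/-- Commutativity of the scheme. -/
def IsCommutative : Prop :=
  ∀ u ∈ S.rels, ∀ v ∈ S.rels, ∀ w ∈ S.rels, S.a u v w = S.a v u w

/-- `S` is a `p`-scheme: `|X|` and all valencies are powers of the prime `p`. -/
def IsPScheme (p : ℕ) : Prop :=
  p.Prime ∧ (∃ n, Fintype.card X = p ^ n) ∧ ∀ s ∈ S.rels, ∃ i, S.val s = p ^ i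

/-- `S` is schurian: its relations are the orbitals of a transitive permutation group. -/
def IsSchurian : Prop :=
  ∃ G : Subgroup (Equiv.Perm X), (∀ x y : X, ∃ g ∈ G, g x = y) ∧
    S.rels = {o | ∃ q : X × X, o = {r : X × X | ∃ g ∈ G, (g q.1, g q.2) = r}}

/-- The right stabilizer `R(s) = {t | st = s}`. -/
def Rstab (s : Set (X × X)) : Set (Set (X × X)) := {t ∈ S.rels | S.cprod s t = {s}}

/-- The left stabilizer `L(s) = {t | ts = s}`. -/
def Lstab (s : Set (X × X)) : Set (Set (X × X)) := {t ∈ S.rels | S.cprod t s = {s}}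

/-- A faithful map: `r(x,y) = r(φ x, φ y)` for all `x, y`. -/
def IsFaithful (φ : X → X) : Prop :=
  ∀ x y : X, ∀ s ∈ S.rels, (x, y) ∈ s → (φ x, φ y) ∈ s

/-- An automorphism of the scheme. -/
def IsAutomorphism (φ : X → X) : Prop := Function.Bijective φ ∧ S.IsFaithful φ

/-- The quotient scheme `S // T` is isomorphic to the cyclic group `C_m`:
there is a surjection `f : X → ZMod m` whose difference map classifies the
double-coset relations `T s T`. -/
def QuotIsoCyclic (T : Set (Set (X × X))) (m : ℕ) : Prop :=
  ∃ f : X → ZMod m, Function.Surjective f ∧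
    ∀ x y x' y' : X, (f y - f x = f y' - f x') ↔
      ∃ s ∈ S.rels, (x, y) ∈ s ∧ ∃ s' ∈ S.sprod (S.sprod T {s}) T, (x', y') ∈ s'

/-- A thin closed subset `T` is isomorphic, as a group under the relational
product, to the additive group `G`. -/
def ThinGroupIso (T : Set (Set (X × X))) (G : Type*) [AddGroup G] : Prop :=
  (∀ t ∈ T, S.val t = 1) ∧ ∃ f : Set (X × X) → G, Set.BijOn f T Set.univ ∧
    ∀ t1 ∈ T, ∀ t2 ∈ T, ∀ u, S.cprod t1 t2 = {u} → f u = f t1 + f t2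

end AssocScheme

/-- The set of relations of the wreath product `F ≀ H`. -/
def wreathRels {W Y : Type*} [Fintype W] [Fintype Y]
    (F : AssocScheme W) (H : AssocScheme Y) : Set (Set ((W × Y) × (W × Y))) :=
  {r | ∃ f ∈ F.rels, r = {p : (W × Y) × (W × Y) | p.1.2 = p.2.2 ∧ (p.1.1, p.2.1) ∈ f}} ∪
  {r | ∃ h ∈ H.rels, h ≠ schemeDiag Y ∧
    r = {p : (W × Y) × (W × Y) | (p.1.2, p.2.2) ∈ h}}

/-!
Count the triangles `x → z → y` with `(x, z) ∈ u`, `(z, y) ∈ v` and `(x, y) ∈ w`. Grouping them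
by the edge `(x, y) ∈ w`, by `(x, z) ∈ u`, or by `(z, y) ∈ v` gives
`|X| a_{uvw} n_w = |X| n_u a_{w v* u} = |X| n_v a_{u* w v}`,
so both `n_u` and `n_v` divide `a_{uvw} n_w`.
-/

namespace AssocScheme

open Finset

open scoped Classical

variable {X : Type*} [Fintype X] (S : AssocScheme X) {s t r u v w : Set (X × X)}

theorem card_filter_eq_a (hs : s ∈ S.rels) (ht : t ∈ S.rels) (hr : r ∈ S.rels) {x y : X}
    (hxy : (x, y) ∈ r) : #{z | (x, z) ∈ s ∧ (z, y) ∈ t} = S.a s t r := by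
  rw [S.a_spec s hs t ht r hr x y hxy, ← Nat.card_eq_finsetCard]
  exact Nat.card_congr (Equiv.subtypeEquivRight fun z => by simp)

theorem card_filter_eq_val (hs : s ∈ S.rels) (x : X) : #{y | (x, y) ∈ s} = S.val s := by
  rw [val, ← S.card_filter_eq_a hs (S.transpose_mem s hs) S.diag_mem (x := x) rfl]
  simp [schemeTransp]

noncomputable def triangles (s t r : Set (X × X)) : Finset (X × X × X) :=
  {p | (p.1, p.2.2) ∈ s ∧ (p.2.2, p.2.1) ∈ t ∧ (p.1, p.2.1) ∈ r}

@[simp]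
theorem mem_triangles {p : X × X × X} :
    p ∈ triangles s t r ↔ (p.1, p.2.2) ∈ s ∧ (p.2.2, p.2.1) ∈ t ∧ (p.1, p.2.1) ∈ r := by
  simp [triangles]

theorem card_triangles (hs : s ∈ S.rels) (ht : t ∈ S.rels) (hr : r ∈ S.rels) :
    #(triangles s t r) = Fintype.card X * (S.a s t r * S.val r) := by
  have fibre (x y : X) : #{z | (x, z) ∈ s ∧ (z, y) ∈ t ∧ (x, y) ∈ r} =
      if (x, y) ∈ r then S.a s t r else 0 := by
    split_ifs with hxy
    · simpa [hxy] using S.card_filter_eq_a hs ht hr hxy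
    · simp [hxy]
  calc #(triangles s t r)
      = ∑ x, ∑ y, #{z | (x, z) ∈ s ∧ (z, y) ∈ t ∧ (x, y) ∈ r} := by
        simp only [triangles, card_filter, Fintype.sum_prod_type]
    _ = ∑ x : X, S.a s t r * S.val r := by
        refine sum_congr rfl fun x _ => ?_
        simp only [fibre, ← S.card_filter_eq_val hr x, sum_ite, sum_const_zero, sum_const,
          smul_eq_mul, add_zero, mul_comm]
    _ = Fintype.card X * (S.a s t r * S.val r) := by simp

theorem card_triangles_eq_card_triangles_transp_mid (u v w : Set (X × X)) :
    #(triangles u v w) = #(triangles w (schemeTransp v) u) :=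
  card_nbij' (fun p => (p.1, p.2.2, p.2.1)) (fun p => (p.1, p.2.2, p.2.1))
    (fun _ _ => by simp_all [schemeTransp]) (fun _ _ => by simp_all [schemeTransp])
    (fun _ _ => rfl) (fun _ _ => rfl)

theorem card_triangles_eq_card_triangles_transp_fst (u v w : Set (X × X)) :
    #(triangles u v w) = #(triangles (schemeTransp u) w v) :=
  card_nbij' (fun p => (p.2.2, p.2.1, p.1)) (fun p => (p.2.2, p.2.1, p.1))
    (fun _ _ => by simp_all [schemeTransp]) (fun _ _ => by simp_all [schemeTransp])
    (fun _ _ => rfl) (fun _ _ => rfl)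

theorem a_mul_val_eq_val_fst_mul (hu : u ∈ S.rels) (hv : v ∈ S.rels) (hw : w ∈ S.rels) :
    S.a u v w * S.val w = S.val u * S.a w (schemeTransp v) u := by
  rcases isEmpty_or_nonempty X with _ | hX
  -- `a` is unconstrained on an empty `X`, but then all relations coincide
  · simp only [val, Subsingleton.elim _ (schemeDiag X)]
  apply Nat.eq_of_mul_eq_mul_left (Fintype.card_pos_iff.mpr hX)
  rw [← S.card_triangles hu hv hw, card_triangles_eq_card_triangles_transp_mid,
    S.card_triangles hw (S.transpose_mem v hv) hu, mul_comm (S.val u)]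

theorem a_mul_val_eq_val_snd_mul (hu : u ∈ S.rels) (hv : v ∈ S.rels) (hw : w ∈ S.rels) :
    S.a u v w * S.val w = S.val v * S.a (schemeTransp u) w v := by
  rcases isEmpty_or_nonempty X with _ | hX
  · simp only [val, Subsingleton.elim _ (schemeDiag X)]
  apply Nat.eq_of_mul_eq_mul_left (Fintype.card_pos_iff.mpr hX)
  rw [← S.card_triangles hu hv hw, card_triangles_eq_card_triangles_transp_fst,
    S.card_triangles (S.transpose_mem u hu) hw hv, mul_comm (S.val v)]

end AssocScheme

/-- `lcm(n_u, n_v) ∣ a_{uvw} n_w`. -/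
theorem stmt4 {X : Type*} [Fintype X] (S : AssocScheme X)
    (u v w : Set (X × X)) (hu : u ∈ S.rels) (hv : v ∈ S.rels) (hw : w ∈ S.rels) :
    Nat.lcm (S.val u) (S.val v) ∣ S.a u v w * S.val w :=
  Nat.lcm_dvd ⟨_, S.a_mul_val_eq_val_fst_mul hu hv hw⟩ ⟨_, S.a_mul_val_eq_val_snd_mul hu hv hw⟩
end

section
/- Let S be a commutative p-scheme on X of order p^n such that the thin radical O_θ(S) has order p^{n-1}. Then S is schurian. -/
open Set

/-!
The thin relations act on `X` as a group `K` of automorphisms (this is where commutativity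
enters), freely and with `p` orbits, the classes. Counting shows that every row of a relation
`s` lies in a single class, where it is an orbit of the stabilizer `K_s = {k ∈ K | s k = s}`. So
`s` induces a permutation of the classes; these permutations form a regular, hence cyclic, group
of order `p`. As every relation then lies in a power of any non-thin relation `v`, and
`K_u ≤ K_s K_v` for `u ∈ s v`, all stabilizers lie in the common stabilizer `K₀` of the
non-thin relations.

Automorphisms are built class by class: given base points `b q` and targets `c q` spanning the
same relations, moving each point by the thin element carrying it to its base point is an
automorphism. Choosing `c q` in the `s`-row of `b q` gives transitivity, and twisting all classes
but one by an element of `K₀` makes point stabilizers transitive on rows, so the orbitals are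
exactly the relations.
-/

namespace AssocScheme

variable {X : Type*} [Fintype X] (S : AssocScheme X)

theorem eq_of_mem_of_mem {s u : Set (X × X)} {q : X × X} (hs : s ∈ S.rels) (hu : u ∈ S.rels)
    (hqs : q ∈ s) (hqu : q ∈ u) : s = u := by
  obtain ⟨r, -, hr⟩ := S.partition q
  rw [hr s ⟨hs, hqs⟩, hr u ⟨hu, hqu⟩]

noncomputable def rel (x y : X) : Set (X × X) := (S.partition (x, y)).exists.choose

theorem rel_mem (x y : X) : S.rel x y ∈ S.rels := (S.partition (x, y)).exists.choose_spec.1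

theorem mem_rel (x y : X) : (x, y) ∈ S.rel x y := (S.partition (x, y)).exists.choose_spec.2

theorem rel_eq_of_mem {s : Set (X × X)} {x y : X} (hs : s ∈ S.rels) (h : (x, y) ∈ s) :
    S.rel x y = s :=
  S.eq_of_mem_of_mem (S.rel_mem x y) hs (S.mem_rel x y) h

theorem rel_self (x : X) : S.rel x x = schemeDiag X := S.rel_eq_of_mem S.diag_mem rfl

theorem rel_swap (x y : X) : S.rel y x = schemeTransp (S.rel x y) :=
  S.rel_eq_of_mem (S.transpose_mem _ (S.rel_mem x y)) (S.mem_rel x y)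

theorem card_row {s : Set (X × X)} (hs : s ∈ S.rels) (x : X) :
    Nat.card {y | (x, y) ∈ s} = S.val s := by
  rw [val, S.a_spec s hs _ (S.transpose_mem s hs) _ S.diag_mem x x rfl]
  simp [schemeTransp]

theorem exists_mem_of_val_ne_zero {s : Set (X × X)} (hs : s ∈ S.rels) (h : S.val s ≠ 0)
    (x : X) : ∃ y, (x, y) ∈ s := by
  rw [← S.card_row hs x, Nat.card_ne_zero] at h
  obtain ⟨⟨y, hy⟩⟩ := h.1
  exact ⟨y, hy⟩

theorem val_transp [Nonempty X] {s : Set (X × X)} (hs : s ∈ S.rels) :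
    S.val (schemeTransp s) = S.val s := by
  have hcount : ∀ r ∈ S.rels, Nat.card {q : X × X // q ∈ r} = Fintype.card X * S.val r := by
    intro r hr
    rw [Nat.card_congr (Equiv.subtypeProdEquivSigmaSubtype fun x y => (x, y) ∈ r),
      Nat.card_sigma]
    have hrow : ∀ x, Nat.card {y // (x, y) ∈ r} = S.val r := S.card_row hr
    simp [hrow]
  have hswap : Nat.card {q : X × X // q ∈ schemeTransp s} = Nat.card {q : X × X // q ∈ s} :=
    Nat.card_congr ((Equiv.prodComm X X).subtypeEquiv fun _ => Iff.rfl)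
  rw [hcount _ (S.transpose_mem s hs), hcount s hs] at hswap
  exact Nat.eq_of_mul_eq_mul_left Fintype.card_pos hswap

theorem mem_cprod_of_mem {s t u : Set (X × X)} (hs : s ∈ S.rels) (ht : t ∈ S.rels)
    (hu : u ∈ S.rels) {x y z : X} (hxy : (x, y) ∈ u) (hxz : (x, z) ∈ s) (hzy : (z, y) ∈ t) :
    u ∈ S.cprod s t := by
  refine ⟨hu, ?_⟩
  rw [S.a_spec s hs t ht u hu x y hxy]
  exact Nat.card_ne_zero.mpr ⟨⟨z, hxz, hzy⟩, inferInstance⟩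

theorem exists_of_mem_cprod {s t u : Set (X × X)} (hs : s ∈ S.rels) (ht : t ∈ S.rels)
    (hu : u ∈ S.cprod s t) {x y : X} (hxy : (x, y) ∈ u) : ∃ z, (x, z) ∈ s ∧ (z, y) ∈ t := by
  have h := hu.2
  rw [S.a_spec s hs t ht u hu.1 x y hxy, Nat.card_ne_zero] at h
  obtain ⟨⟨z, hz⟩⟩ := h.1
  exact ⟨z, hz⟩

theorem mem_cprod_comm (hc : S.IsCommutative) {s t u : Set (X × X)} (hs : s ∈ S.rels)
    (ht : t ∈ S.rels) (hu : u ∈ S.cprod s t) : u ∈ S.cprod t s :=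
  ⟨hu.1, by rw [hc t ht s hs u hu.1]; exact hu.2⟩

theorem existsUnique_of_mem_thinRadical {t : Set (X × X)} (ht : t ∈ S.thinRadical) (x : X) :
    ∃! y, (x, y) ∈ t := by
  have h := S.card_row ht.1 x
  rw [ht.2, Nat.card_eq_one_iff_exists] at h
  obtain ⟨⟨y, hy⟩, h⟩ := h
  exact ⟨y, hy, fun z hz => congrArg Subtype.val (h ⟨z, hz⟩)⟩

theorem eq_of_mem_thinRadical {t : Set (X × X)} (ht : t ∈ S.thinRadical) {x y z : X}
    (hy : (x, y) ∈ t) (hz : (x, z) ∈ t) : y = z :=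
  (S.existsUnique_of_mem_thinRadical ht x).unique hy hz

theorem mem_thinRadical_of_existsUnique {s : Set (X × X)} (hs : s ∈ S.rels) {x : X}
    (h : ∃! y, (x, y) ∈ s) : s ∈ S.thinRadical := by
  refine ⟨hs, ?_⟩
  obtain ⟨y, hy, huniq⟩ := h
  rw [← S.card_row hs x, Nat.card_eq_one_iff_exists]
  exact ⟨⟨y, hy⟩, fun z => Subtype.ext (huniq z.1 z.2)⟩

theorem diag_mem_thinRadical [Nonempty X] : schemeDiag X ∈ S.thinRadical :=
  S.mem_thinRadical_of_existsUnique S.diag_mem (x := Classical.arbitrary X)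
    ⟨_, rfl, fun _ h => h.symm⟩

theorem transp_mem_thinRadical [Nonempty X] {t : Set (X × X)} (ht : t ∈ S.thinRadical) :
    schemeTransp t ∈ S.thinRadical :=
  ⟨S.transpose_mem t ht.1, (S.val_transp ht.1).trans ht.2⟩

/-- That is, the complex product `s t` with a thin `t` is a single relation. -/
theorem mem_of_mem_of_mem_thinRadical {s t u : Set (X × X)} (hs : s ∈ S.rels)
    (ht : t ∈ S.thinRadical) (hu : u ∈ S.rels) {a b b' x y y' : X} (hab : (a, b) ∈ s)
    (hxy : (x, y) ∈ s) (hbb' : (b, b') ∈ t) (hyy' : (y, y') ∈ t) (hab' : (a, b') ∈ u) :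
    (x, y') ∈ u := by
  have htr := S.transpose_mem t ht.1
  have hsu : s ∈ S.cprod u (schemeTransp t) := S.mem_cprod_of_mem hu htr hs hab hab' hbb'
  obtain ⟨z, hxz, hzy⟩ := S.exists_of_mem_cprod hu htr hsu hxy
  rwa [S.eq_of_mem_thinRadical ht hyy' hzy]

theorem nOrd_thinRadical : S.nOrd S.thinRadical = Nat.card S.thinRadical := by
  have hfin : S.thinRadical.Finite := Set.toFinite _
  rw [nOrd, finsum_mem_eq_finite_toFinset_sum _ hfin,
    Finset.sum_congr rfl fun t ht => (hfin.mem_toFinset.mp ht).2, Finset.sum_const, smul_eq_mul,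
    mul_one, Nat.card_eq_card_finite_toFinset hfin]

def autGroup : Subgroup (Equiv.Perm X) where
  carrier := {g | S.IsFaithful g}
  one_mem' := fun _ _ _ _ h => h
  mul_mem' := fun ha hb x y s hs h => ha _ _ s hs (hb x y s hs h)
  inv_mem' := by
    intro g hg x y s hs h
    have h' := hg (g⁻¹ x) (g⁻¹ y) _ (S.rel_mem _ _) (S.mem_rel _ _)
    simp only [Equiv.Perm.coe_inv, Equiv.apply_symm_apply] at h'
    rw [← S.eq_of_mem_of_mem (S.rel_mem _ _) hs h' h]
    exact S.mem_rel _ _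

theorem rel_apply_apply {g : Equiv.Perm X} (hg : g ∈ S.autGroup) (x y : X) :
    S.rel (g x) (g y) = S.rel x y :=
  S.rel_eq_of_mem (S.rel_mem x y) (hg x y _ (S.rel_mem x y) (S.mem_rel x y))

theorem mem_autGroup_of_rel {g : Equiv.Perm X} (h : ∀ x y, S.rel (g x) (g y) = S.rel x y) :
    g ∈ S.autGroup := by
  intro x y s hs hxy
  rw [← S.rel_eq_of_mem hs hxy, ← h]
  exact S.mem_rel _ _

theorem isSchurian_of_exists_mem_autGroup (hne : ∀ s ∈ S.rels, s.Nonempty)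
    (h : ∀ s ∈ S.rels, ∀ x y x' y', (x, y) ∈ s → (x', y') ∈ s →
      ∃ g ∈ S.autGroup, g x = x' ∧ g y = y') : S.IsSchurian := by
  have horbit : ∀ x y, {r : X × X | ∃ g ∈ S.autGroup, (g x, g y) = r} = S.rel x y := by
    refine fun x y => Set.ext fun ⟨a, b⟩ => ⟨?_, fun hab => ?_⟩
    · rintro ⟨g, hg, hgr⟩
      rw [← hgr]
      exact hg x y _ (S.rel_mem x y) (S.mem_rel x y)
    · obtain ⟨g, hg, rfl, rfl⟩ := h _ (S.rel_mem x y) x y a b (S.mem_rel x y) hab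
      exact ⟨g, hg, rfl⟩
  refine ⟨S.autGroup, fun x y => ?_, Set.ext fun o => ⟨fun ho => ?_, ?_⟩⟩
  · obtain ⟨g, hg, hgx, -⟩ := h _ S.diag_mem x x y y rfl rfl
    exact ⟨g, hg, hgx⟩
  · obtain ⟨⟨x, y⟩, hxy⟩ := hne o ho
    exact ⟨(x, y), by rw [horbit, S.rel_eq_of_mem ho hxy]⟩
  · rintro ⟨⟨x, y⟩, rfl⟩
    rw [horbit]
    exact S.rel_mem x y

section Thin

variable [Nonempty X]

def thinGroup : Subgroup (Equiv.Perm X) where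
  carrier := {g | ∃ t ∈ S.thinRadical, ∀ x, (x, g x) ∈ t}
  one_mem' := ⟨_, S.diag_mem_thinRadical, fun _ => rfl⟩
  mul_mem' := by
    rintro g h ⟨tg, htg, hg⟩ ⟨th, hth, hh⟩
    have hg' : ∀ z, (z, g⁻¹ z) ∈ schemeTransp tg := fun z => by
      simpa [schemeTransp] using hg (g⁻¹ z)
    let x₀ := Classical.arbitrary X
    refine ⟨S.rel x₀ (g (h x₀)), S.mem_thinRadical_of_existsUnique (S.rel_mem _ _)
      ⟨g (h x₀), S.mem_rel _ _, fun z hz => ?_⟩, fun x => ?_⟩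
    · -- pulling `z` back along `g` lands in the `th`-row of `x₀`
      have := S.mem_of_mem_of_mem_thinRadical (S.rel_mem _ _) (S.transp_mem_thinRadical htg)
        hth.1 (S.mem_rel _ _) hz (hg' _) (hg' z) (by simpa using hh x₀)
      rw [← S.eq_of_mem_thinRadical hth this (hh x₀)]
      simp
    · exact S.mem_of_mem_of_mem_thinRadical hth.1 htg (S.rel_mem _ _) (hh x₀) (hh x) (hg _)
        (hg _) (S.mem_rel _ _)
  inv_mem' := by
    rintro g ⟨t, ht, hg⟩
    exact ⟨_, S.transp_mem_thinRadical ht, fun x => by simpa [schemeTransp] using hg (g⁻¹ x)⟩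

theorem rel_apply_mem_thinRadical {g : Equiv.Perm X} (hg : g ∈ S.thinGroup) (x : X) :
    S.rel x (g x) ∈ S.thinRadical := by
  obtain ⟨t, ht, hgt⟩ := hg
  rwa [S.rel_eq_of_mem ht.1 (hgt x)]

theorem exists_mem_thinGroup_apply_eq {x y : X} (h : S.rel x y ∈ S.thinRadical) :
    ∃ g ∈ S.thinGroup, g x = y := by
  choose f hf using fun z => (S.existsUnique_of_mem_thinRadical h z).exists
  have hinj : Function.Injective f := fun a b hab =>
    S.eq_of_mem_thinRadical (S.transp_mem_thinRadical h) (y := a) (z := b) (x := f a) (hf a)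
      (hab ▸ hf b)
  let g := Equiv.ofBijective f (Finite.injective_iff_bijective.mp hinj)
  exact ⟨g, ⟨_, h, hf⟩, S.eq_of_mem_thinRadical h (hf x) (S.mem_rel x y)⟩

theorem eq_of_mem_thinGroup {g h : Equiv.Perm X} (hg : g ∈ S.thinGroup) (hh : h ∈ S.thinGroup)
    {x : X} (hx : g x = h x) : g = h := by
  obtain ⟨tg, htg, hgt⟩ := hg
  obtain ⟨th, hth, hht⟩ := hh
  have : tg = th := S.eq_of_mem_of_mem htg.1 hth.1 (hgt x) (hx ▸ hht x)
  subst this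
  exact Equiv.ext fun y => S.eq_of_mem_thinRadical htg (hgt y) (hht y)

theorem rel_apply_eq_rel_apply {g : Equiv.Perm X} (hg : g ∈ S.thinGroup) {a b x y : X}
    (h : S.rel a b = S.rel x y) : S.rel a (g b) = S.rel x (g y) := by
  obtain ⟨t, ht, hgt⟩ := hg
  have hxy : (x, y) ∈ S.rel a b := h ▸ S.mem_rel x y
  exact (S.rel_eq_of_mem (S.rel_mem _ _) (S.mem_of_mem_of_mem_thinRadical (S.rel_mem a b) ht
    (S.rel_mem _ _) (S.mem_rel a b) hxy (hgt b) (hgt y) (S.mem_rel _ _))).symm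

/-- Commutativity puts `r(x, g y)` into `r(g x, g y) t`, which forces `(x, y) ∈ r(g x, g y)`. -/
theorem thinGroup_le_autGroup (hc : S.IsCommutative) : S.thinGroup ≤ S.autGroup := by
  rintro g ⟨t, ht, hgt⟩ x y s hs hxy
  have hw : S.rel x (g y) ∈ S.cprod (S.rel (g x) (g y)) t :=
    S.mem_cprod_comm hc ht.1 (S.rel_mem _ _)
      (S.mem_cprod_of_mem ht.1 (S.rel_mem _ _) (S.rel_mem _ _) (S.mem_rel _ _) (hgt x)
        (S.mem_rel _ _))
  obtain ⟨z, hxz, hz⟩ := S.exists_of_mem_cprod (S.rel_mem _ _) ht.1 hw (S.mem_rel _ _)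
  obtain rfl : z = y := g.injective (S.eq_of_mem_thinRadical ht (hgt z) hz)
  rw [← S.eq_of_mem_of_mem (S.rel_mem _ _) hs hxz hxy]
  exact S.mem_rel _ _

theorem rel_apply_apply_eq (hc : S.IsCommutative) {g₁ g₂ : Equiv.Perm X}
    (hg₁ : g₁ ∈ S.thinGroup) (hg₂ : g₂ ∈ S.thinGroup) {a b x y : X}
    (h : S.rel a b = S.rel x y) : S.rel (g₁ a) (g₂ b) = S.rel (g₁ x) (g₂ y) := by
  have hinv := S.thinGroup_le_autGroup hc (inv_mem hg₁)
  have key : ∀ c d, S.rel (g₁ c) (g₂ d) = S.rel c ((g₁⁻¹ * g₂) d) := fun c d => by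
    rw [← S.rel_apply_apply hinv]
    simp
  rw [key, key, S.rel_apply_eq_rel_apply (mul_mem (inv_mem hg₁) hg₂) h]

abbrev Classes : Type _ := MulAction.orbitRel.Quotient S.thinGroup X

def classOf (x : X) : S.Classes := Quotient.mk (MulAction.orbitRel S.thinGroup X) x

theorem classOf_eq_classOf_iff {x y : X} :
    S.classOf x = S.classOf y ↔ ∃ g ∈ S.thinGroup, g x = y := by
  rw [eq_comm, classOf, classOf, Quotient.eq, MulAction.orbitRel_apply, MulAction.mem_orbit_iff]
  exact ⟨fun ⟨g, hg⟩ => ⟨g, g.2, hg⟩, fun ⟨g, hg, hgx⟩ => ⟨⟨g, hg⟩, hgx⟩⟩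

theorem classOf_eq_classOf_iff_rel {x y : X} :
    S.classOf x = S.classOf y ↔ S.rel x y ∈ S.thinRadical := by
  rw [classOf_eq_classOf_iff]
  refine ⟨?_, S.exists_mem_thinGroup_apply_eq⟩
  rintro ⟨g, hg, rfl⟩
  exact S.rel_apply_mem_thinRadical hg x

theorem classOf_apply {g : Equiv.Perm X} (hg : g ∈ S.thinGroup) (x : X) :
    S.classOf (g x) = S.classOf x :=
  (S.classOf_eq_classOf_iff.mpr ⟨g, hg, rfl⟩).symm

theorem card_thinGroup : Nat.card S.thinGroup = Nat.card S.thinRadical := by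
  let x₀ := Classical.arbitrary X
  refine Nat.card_congr (Equiv.ofBijective
    (fun g => ⟨S.rel x₀ (g.1 x₀), S.rel_apply_mem_thinRadical g.2 x₀⟩) ⟨?_, ?_⟩)
  · intro g h hgh
    have hx : (x₀, h.1 x₀) ∈ S.rel x₀ (g.1 x₀) := by
      rw [show S.rel x₀ (g.1 x₀) = S.rel x₀ (h.1 x₀) from congrArg Subtype.val hgh]
      exact S.mem_rel _ _
    exact Subtype.ext (S.eq_of_mem_thinGroup g.2 h.2
      (S.eq_of_mem_thinRadical (S.rel_apply_mem_thinRadical g.2 x₀) (S.mem_rel _ _) hx))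
  · rintro ⟨t, ht⟩
    obtain ⟨y, hy, -⟩ := S.existsUnique_of_mem_thinRadical ht x₀
    have hrel := S.rel_eq_of_mem ht.1 hy
    obtain ⟨g, hg, rfl⟩ := S.exists_mem_thinGroup_apply_eq (hrel ▸ ht)
    exact ⟨⟨g, hg⟩, Subtype.ext hrel⟩

theorem card_eq_card_classes_mul :
    Fintype.card X = Nat.card S.Classes * Nat.card S.thinRadical := by
  have horbit : ∀ x : X, Nat.card (MulAction.orbit S.thinGroup x) = Nat.card S.thinRadical :=
    fun x => (Nat.card_range_of_injective fun g h hgh =>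
      Subtype.ext (S.eq_of_mem_thinGroup g.2 h.2 hgh)).trans S.card_thinGroup
  let _ : Fintype S.Classes := Fintype.ofFinite _
  rw [← Nat.card_eq_fintype_card, Nat.card_congr (MulAction.selfEquivSigmaOrbits S.thinGroup X),
    Nat.card_sigma]
  simp [horbit]

theorem exists_classOf_eq (q : S.Classes) : ∃ x, S.classOf x = q := Quotient.exists_rep q

theorem classOf_out (q : S.Classes) : S.classOf q.out = q := Quotient.out_eq q

/-- The thin part of the right stabilizer `R(s) = {t | s t = s}`. -/
def rowStab (s : Set (X × X)) : Subgroup (Equiv.Perm X) where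
  carrier := {g | g ∈ S.thinGroup ∧ ∀ x y, (x, g y) ∈ s ↔ (x, y) ∈ s}
  one_mem' := ⟨one_mem _, fun _ _ => Iff.rfl⟩
  mul_mem' := fun ⟨hg, hgs⟩ ⟨hh, hhs⟩ => ⟨mul_mem hg hh, fun x y => (hgs x _).trans (hhs x y)⟩
  inv_mem' := by
    rintro g ⟨hg, hgs⟩
    exact ⟨inv_mem hg, fun x y => by simpa using (hgs x (g⁻¹ y)).symm⟩

theorem mem_rowStab_of_mem {s : Set (X × X)} (hs : s ∈ S.rels) {g : Equiv.Perm X}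
    (hg : g ∈ S.thinGroup) {x y : X} (hxy : (x, y) ∈ s) (hxgy : (x, g y) ∈ s) :
    g ∈ S.rowStab s := by
  refine ⟨hg, fun a b => ⟨fun h => ?_, fun h => ?_⟩⟩
  · have := S.rel_apply_eq_rel_apply (inv_mem hg) ((S.rel_eq_of_mem hs h).trans
      (S.rel_eq_of_mem hs hxgy).symm)
    simp only [Equiv.Perm.coe_inv, Equiv.symm_apply_apply] at this
    rw [← S.rel_eq_of_mem hs hxy, ← this]
    exact S.mem_rel _ _
  · have := S.rel_apply_eq_rel_apply hg ((S.rel_eq_of_mem hs h).trans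
      (S.rel_eq_of_mem hs hxy).symm)
    rw [← S.rel_eq_of_mem hs hxgy, ← this]
    exact S.mem_rel _ _

theorem rowStab_eq_bot {t : Set (X × X)} (ht : t ∈ S.thinRadical) : S.rowStab t = ⊥ := by
  refine (Subgroup.eq_bot_iff_forall _).mpr fun g hg => ?_
  obtain ⟨y, hy, -⟩ := S.existsUnique_of_mem_thinRadical ht (Classical.arbitrary X)
  exact S.eq_of_mem_thinGroup hg.1 (one_mem _)
    (S.eq_of_mem_thinRadical ht ((hg.2 _ _).mpr hy) hy)

theorem card_row_inter_class {s : Set (X × X)} (hs : s ∈ S.rels) {x y : X} (hxy : (x, y) ∈ s) :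
    Nat.card {y' // (x, y') ∈ s ∧ S.classOf y' = S.classOf y} = Nat.card (S.rowStab s) := by
  refine (Nat.card_congr (Equiv.ofBijective
    (fun g => ⟨g.1 y, (g.2.2 x y).mpr hxy, S.classOf_apply g.2.1 y⟩) ⟨?_, ?_⟩)).symm
  · exact fun g h hgh => Subtype.ext (S.eq_of_mem_thinGroup g.2.1 h.2.1 (congrArg Subtype.val hgh))
  · rintro ⟨y', hy', hclass⟩
    obtain ⟨g, hg, rfl⟩ := S.classOf_eq_classOf_iff.mp hclass.symm
    exact ⟨⟨g, S.mem_rowStab_of_mem hs hg hxy hy'⟩, rfl⟩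

theorem ncard_image_row_mul_card_rowStab {s : Set (X × X)} (hs : s ∈ S.rels) (x : X) :
    (S.classOf '' {y | (x, y) ∈ s}).ncard * Nat.card (S.rowStab s) = S.val s := by
  classical
  let _ : Fintype S.Classes := Fintype.ofFinite _
  rw [Set.ncard_eq_toFinset_card', Set.toFinset_image, ← S.card_row hs x,
    Nat.card_eq_card_toFinset, Finset.card_eq_sum_card_image S.classOf,
    Finset.sum_const_nat fun q hq => ?_]
  obtain ⟨z, hz, rfl⟩ := Finset.mem_image.mp hq
  rw [← S.card_row_inter_class hs (by simpa using hz), Nat.card_eq_fintype_card,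
    Fintype.card_subtype, Set.toFinset_ofPred, Finset.filter_filter]

def Induces (s : Set (X × X)) (σ : Equiv.Perm S.Classes) : Prop :=
  ∀ x y, (x, y) ∈ s → σ (S.classOf x) = S.classOf y

/-- A copy of the quotient scheme `S // O_θ(S)`. -/
def inducedGroup : Subgroup (Equiv.Perm S.Classes) :=
  Subgroup.closure {σ | ∃ s ∈ S.rels, S.Induces s σ}

/-- The automorphism sends `x = h (b q)`, with `h` thin, to `h (c q)`. -/
theorem exists_mem_autGroup_of_rel_eq (hc : S.IsCommutative) (b c : S.Classes → X)
    (hb : ∀ q, S.classOf (b q) = q) (hbc : ∀ q q', S.rel (c q) (c q') = S.rel (b q) (b q')) :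
    ∃ g ∈ S.autGroup, ∀ q, g (b q) = c q := by
  choose h hh hhx using fun x => S.classOf_eq_classOf_iff.mp (hb (S.classOf x))
  let f x := h x (c (S.classOf x))
  have hf : ∀ x y, S.rel (f x) (f y) = S.rel x y := fun x y => by
    rw [S.rel_apply_apply_eq hc (hh x) (hh y) (hbc _ _), hhx, hhx]
  have hinj : Function.Injective f := fun x y hxy => by
    have := S.mem_rel x y
    rwa [← hf x y, hxy, S.rel_self] at this
  refine ⟨Equiv.ofBijective f (Finite.injective_iff_bijective.mp hinj),
    S.mem_autGroup_of_rel hf, fun q => ?_⟩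
  have hfix := hhx (b q)
  rw [hb] at hfix
  simp only [Equiv.ofBijective_apply, f, hb,
    S.eq_of_mem_thinGroup (hh (b q)) (one_mem _) hfix, Equiv.Perm.one_apply]

structure IsCommPSchemeOfThinIndex (p : ℕ) : Prop where
  prime : p.Prime
  comm : S.IsCommutative
  val_eq_pow : ∀ s ∈ S.rels, ∃ i, S.val s = p ^ i
  card_classes : Nat.card S.Classes = p

end Thin

namespace IsCommPSchemeOfThinIndex

variable {S} [Nonempty X] {p : ℕ} (H : S.IsCommPSchemeOfThinIndex p)
include H

theorem exists_mem_row {s : Set (X × X)} (hs : s ∈ S.rels) (x : X) : ∃ y, (x, y) ∈ s := by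
  obtain ⟨i, hi⟩ := H.val_eq_pow s hs
  exact S.exists_mem_of_val_ne_zero hs (hi ▸ pow_ne_zero i H.prime.ne_zero) x

/-- The number of classes met by a row divides `n_s`, a power of `p`, and is smaller than `p`
because a non-thin relation avoids the class of `x`. -/
theorem classOf_eq_of_mem_row {s : Set (X × X)} (hs : s ∈ S.rels) {x y y' : X}
    (hy : (x, y) ∈ s) (hy' : (x, y') ∈ s) : S.classOf y = S.classOf y' := by
  by_cases hthin : s ∈ S.thinRadical
  · rw [S.eq_of_mem_thinRadical hthin hy hy']
  set M := S.classOf '' {y | (x, y) ∈ s}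
  have hlt : M.ncard < p := by
    rw [← H.card_classes, ← Set.ncard_univ]
    refine Set.ncard_lt_ncard (Set.ssubset_univ_iff.mpr fun hM => hthin ?_)
    obtain ⟨z, hz, hzx⟩ := hM ▸ Set.mem_univ (S.classOf x)
    rw [← S.rel_eq_of_mem hs hz]
    exact S.classOf_eq_classOf_iff_rel.mp hzx.symm
  obtain ⟨i, hi⟩ := H.val_eq_pow s hs
  obtain ⟨j, -, hj⟩ := (Nat.dvd_prime_pow H.prime).mp
    (Dvd.intro _ ((S.ncard_image_row_mul_card_rowStab hs x).trans hi))
  have hM : M.ncard ≤ 1 := by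
    rcases j with _ | j
    · rw [hj, pow_zero]
    · exact absurd (hj ▸ Nat.le_self_pow (Nat.succ_ne_zero j) p) (not_le.mpr hlt)
  exact (Set.ncard_le_one_iff).mp hM ⟨y, hy, rfl⟩ ⟨y', hy', rfl⟩

theorem exists_mem_rowStab_apply_eq {s : Set (X × X)} (hs : s ∈ S.rels) {x y y' : X}
    (hy : (x, y) ∈ s) (hy' : (x, y') ∈ s) : ∃ g ∈ S.rowStab s, g y = y' := by
  obtain ⟨g, hg, rfl⟩ := S.classOf_eq_classOf_iff.mp (H.classOf_eq_of_mem_row hs hy hy')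
  exact ⟨g, S.mem_rowStab_of_mem hs hg hy hy', rfl⟩

theorem exists_induced_map {s : Set (X × X)} (hs : s ∈ S.rels) :
    ∃ f : S.Classes → S.Classes, ∀ x y, (x, y) ∈ s → f (S.classOf x) = S.classOf y := by
  have : ∀ q, ∃ q', ∀ x y, S.classOf x = q → (x, y) ∈ s → S.classOf y = q' := by
    intro q
    obtain ⟨x₀, rfl⟩ := S.exists_classOf_eq q
    obtain ⟨y₀, hy₀⟩ := H.exists_mem_row hs x₀
    refine ⟨S.classOf y₀, fun x y hx hxy => ?_⟩
    obtain ⟨g, hg, rfl⟩ := S.classOf_eq_classOf_iff.mp hx.symm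
    rw [← S.classOf_apply hg y₀]
    exact H.classOf_eq_of_mem_row hs hxy (S.thinGroup_le_autGroup H.comm hg _ _ s hs hy₀)
  choose f hf using this
  exact ⟨f, fun x y hxy => (hf _ x y rfl hxy).symm⟩

theorem exists_induces {s : Set (X × X)} (hs : s ∈ S.rels) : ∃ σ, S.Induces s σ := by
  obtain ⟨f, hf⟩ := H.exists_induced_map hs
  obtain ⟨f', hf'⟩ := H.exists_induced_map (S.transpose_mem s hs)
  refine ⟨⟨f, f', fun q => ?_, fun q => ?_⟩, hf⟩
  · obtain ⟨x, rfl⟩ := S.exists_classOf_eq q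
    obtain ⟨y, hy⟩ := H.exists_mem_row hs x
    rw [hf x y hy, hf' y x hy]
  · obtain ⟨y, rfl⟩ := S.exists_classOf_eq q
    obtain ⟨x, hx⟩ := H.exists_mem_row (S.transpose_mem s hs) y
    rw [hf' y x hx, hf x y hx]

theorem mem_thinRadical_of_induces {s : Set (X × X)} (hs : s ∈ S.rels) {σ} (hσ : S.Induces s σ)
    {q : S.Classes} (hq : σ q = q) : s ∈ S.thinRadical := by
  obtain ⟨x, rfl⟩ := S.exists_classOf_eq q
  obtain ⟨y, hy⟩ := H.exists_mem_row hs x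
  rw [← S.rel_eq_of_mem hs hy, ← S.classOf_eq_classOf_iff_rel, ← hσ x y hy, hq]

theorem exists_induces_of_mem_inducedGroup {σ} (hσ : σ ∈ S.inducedGroup) :
    ∃ s ∈ S.rels, S.Induces s σ := by
  induction hσ using Subgroup.closure_induction with
  | mem σ hσ => exact hσ
  | one =>
    refine ⟨schemeDiag X, S.diag_mem, fun x y hxy => ?_⟩
    obtain rfl : x = y := hxy
    rfl
  | mul σ τ _ _ hσ hτ =>
    obtain ⟨s, hs, hσ⟩ := hσ
    obtain ⟨v, hv, hτ⟩ := hτ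
    let x₀ := Classical.arbitrary X
    obtain ⟨y₀, hy₀⟩ := H.exists_mem_row hv x₀
    obtain ⟨z₀, hz₀⟩ := H.exists_mem_row hs y₀
    have hw : S.rel x₀ z₀ ∈ S.cprod v s :=
      S.mem_cprod_of_mem hv hs (S.rel_mem _ _) (S.mem_rel _ _) hy₀ hz₀
    refine ⟨_, S.rel_mem x₀ z₀, fun x z hxz => ?_⟩
    obtain ⟨y, hxy, hyz⟩ := S.exists_of_mem_cprod hv hs hw hxz
    rw [Equiv.Perm.mul_apply, hτ x y hxy, hσ y z hyz]
  | inv σ _ hσ =>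
    obtain ⟨s, hs, hσ⟩ := hσ
    exact ⟨_, S.transpose_mem s hs, fun x y hxy => Equiv.Perm.inv_eq_iff_eq.mpr (hσ y x hxy).symm⟩

theorem eq_one_of_mem_inducedGroup {σ} (hσ : σ ∈ S.inducedGroup) {q : S.Classes}
    (hq : σ q = q) : σ = 1 := by
  obtain ⟨s, hs, hσs⟩ := H.exists_induces_of_mem_inducedGroup hσ
  have hthin := H.mem_thinRadical_of_induces hs hσs hq
  ext q'
  obtain ⟨x, rfl⟩ := S.exists_classOf_eq q'
  obtain ⟨y, hy⟩ := H.exists_mem_row hs x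
  rw [hσs x y hy, Equiv.Perm.one_apply, S.classOf_eq_classOf_iff_rel, S.rel_swap,
    S.rel_eq_of_mem hs hy]
  exact S.transp_mem_thinRadical hthin

/-- The induced group acts regularly on the `p` classes. -/
theorem card_inducedGroup : Nat.card S.inducedGroup = p := by
  let x₀ := Classical.arbitrary X
  rw [← H.card_classes]
  refine Nat.card_congr (Equiv.ofBijective (fun σ => σ.1 (S.classOf x₀)) ⟨?_, ?_⟩)
  · intro σ τ hστ
    have h := H.eq_one_of_mem_inducedGroup (mul_mem (inv_mem τ.2) σ.2) (q := S.classOf x₀)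
      (by simp only [Equiv.Perm.mul_apply, hστ]; exact τ.1.symm_apply_apply _)
    exact Subtype.ext (inv_mul_eq_one.mp h).symm
  · intro q
    obtain ⟨y, rfl⟩ := S.exists_classOf_eq q
    obtain ⟨σ, hσ⟩ := H.exists_induces (S.rel_mem x₀ y)
    exact ⟨⟨σ, Subgroup.subset_closure ⟨_, S.rel_mem x₀ y, hσ⟩⟩, hσ _ _ (S.mem_rel x₀ y)⟩

theorem rowStab_le_of_mem_cprod {s v u : Set (X × X)} (hs : s ∈ S.rels) (hv : v ∈ S.rels)
    (hu : u ∈ S.cprod s v) (hsv : S.rowStab s ≤ S.rowStab v) : S.rowStab u ≤ S.rowStab v := by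
  intro k hk
  obtain ⟨y, hy⟩ := H.exists_mem_row hu.1 (Classical.arbitrary X)
  obtain ⟨z, hxz, hzy⟩ := S.exists_of_mem_cprod hs hv hu hy
  obtain ⟨z', hxz', hzky⟩ := S.exists_of_mem_cprod hs hv hu ((hk.2 _ _).mpr hy)
  obtain ⟨k₁, hk₁, rfl⟩ := H.exists_mem_rowStab_apply_eq hs hxz hxz'
  have hk₁y : (k₁ z, k₁ y) ∈ v := S.thinGroup_le_autGroup H.comm hk₁.1 _ _ v hv hzy
  obtain ⟨k₂, hk₂, hk₂y⟩ := H.exists_mem_rowStab_apply_eq hv hk₁y hzky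
  refine S.mem_rowStab_of_mem hv hk.1 hzy ?_
  rw [← hk₂y, hk₂.2, (hsv hk₁).2]
  exact hzy

theorem rowStab_le_of_induces_pow {v : Set (X × X)} (hv : v ∈ S.rels) {δ}
    (hδ : S.Induces v δ) (m : ℕ) {w : Set (X × X)} (hw : w ∈ S.rels)
    (hwm : S.Induces w (δ ^ m)) : S.rowStab w ≤ S.rowStab v := by
  induction m generalizing w with
  | zero =>
    have hthin := H.mem_thinRadical_of_induces hw hwm (q := S.classOf (Classical.arbitrary X))
      (pow_zero δ ▸ rfl)
    rw [S.rowStab_eq_bot hthin]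
    exact bot_le
  | succ m ih =>
    let x := Classical.arbitrary X
    obtain ⟨y, hxy⟩ := H.exists_mem_row hw x
    obtain ⟨z, hzy⟩ := H.exists_mem_row (S.transpose_mem v hv) y
    have hw' : S.rel x z ∈ S.cprod w (schemeTransp v) :=
      S.mem_cprod_of_mem hw (S.transpose_mem v hv) (S.rel_mem x z) (S.mem_rel x z) hxy hzy
    refine H.rowStab_le_of_mem_cprod (S.rel_mem x z) hv
      (S.mem_cprod_of_mem (S.rel_mem x z) hv hw hxy (S.mem_rel x z) hzy) (ih (S.rel_mem x z) ?_)
    intro a c hac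
    obtain ⟨b, hab, hbc⟩ := S.exists_of_mem_cprod hw (S.transpose_mem v hv) hw' hac
    apply δ.injective
    rw [← Equiv.Perm.mul_apply, ← pow_succ', hwm a b hab, hδ c b hbc]

/-- Since the induced group is cyclic of prime order, the permutation induced by any relation is
a power of the one induced by a non-thin relation `v`. -/
theorem rowStab_le_of_not_mem_thinRadical {s v : Set (X × X)} (hs : s ∈ S.rels)
    (hv : v ∈ S.rels) (hv' : v ∉ S.thinRadical) : S.rowStab s ≤ S.rowStab v := by
  have := Fact.mk H.prime
  obtain ⟨σ, hσ⟩ := H.exists_induces hs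
  obtain ⟨δ, hδ⟩ := H.exists_induces hv
  let σ' : S.inducedGroup := ⟨σ, Subgroup.subset_closure ⟨s, hs, hσ⟩⟩
  let δ' : S.inducedGroup := ⟨δ, Subgroup.subset_closure ⟨v, hv, hδ⟩⟩
  have hδ' : δ' ≠ 1 := fun h => hv' <| H.mem_thinRadical_of_induces hv hδ
    (q := S.classOf (Classical.arbitrary X)) (by rw [show δ = 1 from congrArg Subtype.val h]; rfl)
  obtain ⟨m, hm⟩ := mem_powers_of_prime_card H.card_inducedGroup hδ' (g' := σ')
  refine H.rowStab_le_of_induces_pow hv hδ m hs ?_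
  rwa [show δ ^ m = σ from congrArg Subtype.val hm]

/-- By commutativity `r(b, c')` lies in `s r(b, b')`; the resulting discrepancy lies in
`rowStab s ≤ rowStab (r(b, b'))`. -/
theorem rel_eq_rel_of_mem_of_mem {s : Set (X × X)} (hs : s ∈ S.rels)
    {b b' c c' : X} (hbc : (b, c) ∈ s) (hbc' : (b', c') ∈ s)
    (hbb' : S.classOf b ≠ S.classOf b') : S.rel c c' = S.rel b b' := by
  have hu : S.rel b b' ∉ S.thinRadical := fun h => hbb' (S.classOf_eq_classOf_iff_rel.mpr h)
  have hr : S.rel b c' ∈ S.cprod s (S.rel b b') :=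
    S.mem_cprod_comm H.comm (S.rel_mem _ _) hs
      (S.mem_cprod_of_mem (S.rel_mem _ _) hs (S.rel_mem _ _) (S.mem_rel _ _) (S.mem_rel _ _) hbc')
  obtain ⟨z, hbz, hzc'⟩ := S.exists_of_mem_cprod hs (S.rel_mem _ _) hr (S.mem_rel _ _)
  obtain ⟨k, hk, rfl⟩ := H.exists_mem_rowStab_apply_eq hs hbc hbz
  have hk' := H.rowStab_le_of_not_mem_thinRadical hs (S.rel_mem b b') hu hk
  rw [← S.rel_apply_apply (S.thinGroup_le_autGroup H.comm hk.1)]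
  exact S.rel_eq_of_mem (S.rel_mem _ _) ((hk'.2 _ _).mpr hzc')

theorem rel_apply_eq_of_mem_rowStab {s : Set (X × X)} (hs : s ∈ S.rels)
    {k : Equiv.Perm X} (hk : k ∈ S.rowStab s) {a a' : X}
    (haa' : S.classOf a ≠ S.classOf a') : S.rel a (k a') = S.rel a a' := by
  have hu : S.rel a a' ∉ S.thinRadical := fun h => haa' (S.classOf_eq_classOf_iff_rel.mpr h)
  exact S.rel_eq_of_mem (S.rel_mem _ _)
    (((H.rowStab_le_of_not_mem_thinRadical hs (S.rel_mem a a') hu hk).2 _ _).mpr (S.mem_rel _ _))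

theorem exists_mem_autGroup_apply_eq (x x' : X) : ∃ g ∈ S.autGroup, g x = x' := by
  classical
  by_cases hxx' : S.classOf x = S.classOf x'
  · obtain ⟨g, hg, hgx⟩ := S.classOf_eq_classOf_iff.mp hxx'
    exact ⟨g, S.thinGroup_le_autGroup H.comm hg, hgx⟩
  let b q := if q = S.classOf x then x else q.out
  have hb : ∀ q, S.classOf (b q) = q := fun q => by
    by_cases hq : q = S.classOf x
    · simp [b, hq]
    · simp [b, hq, S.classOf_out]
  have : ∀ q, ∃ y, (b q, y) ∈ S.rel x x' ∧ (q = S.classOf x → y = x') := fun q => by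
    by_cases hq : q = S.classOf x
    · exact ⟨x', by simpa [b, hq] using S.mem_rel x x', fun _ => rfl⟩
    · obtain ⟨y, hy⟩ := H.exists_mem_row (S.rel_mem x x') (b q)
      exact ⟨y, hy, fun h => absurd h hq⟩
  choose c hc hcx using this
  have hbc : ∀ q q', S.rel (c q) (c q') = S.rel (b q) (b q') := fun q q' => by
    by_cases hqq' : q = q'
    · rw [hqq', S.rel_self, S.rel_self]
    · exact H.rel_eq_rel_of_mem_of_mem (S.rel_mem x x') (hc q) (hc q') (by rwa [hb, hb])
  obtain ⟨g, hg, hgb⟩ := S.exists_mem_autGroup_of_rel_eq H.comm b c hb hbc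
  refine ⟨g, hg, ?_⟩
  simpa [b, hcx _ rfl] using hgb (S.classOf x)

/-- Fix the class of `x` pointwise and move every other class by `k ∈ rowStab s`, which
stabilizes every non-thin relation. -/
theorem exists_mem_autGroup_fix_apply_eq {s : Set (X × X)} (hs : s ∈ S.rels)
    (hs' : s ∉ S.thinRadical) {x y y' : X} (hy : (x, y) ∈ s) (hy' : (x, y') ∈ s) :
    ∃ g ∈ S.autGroup, g x = x ∧ g y = y' := by
  classical
  obtain ⟨k, hk, rfl⟩ := H.exists_mem_rowStab_apply_eq hs hy hy'
  have hkaut := S.thinGroup_le_autGroup H.comm hk.1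
  have hxy : S.classOf x ≠ S.classOf y := fun h =>
    hs' (S.rel_eq_of_mem hs hy ▸ S.classOf_eq_classOf_iff_rel.mp h)
  let b q := if q = S.classOf x then x else if q = S.classOf y then y else q.out
  have hb : ∀ q, S.classOf (b q) = q := fun q => by
    by_cases hqx : q = S.classOf x
    · simp [b, hqx]
    by_cases hqy : q = S.classOf y
    · simp [b, hqy, Ne.symm hxy]
    · simp [b, hqx, hqy, S.classOf_out]
  let c q := if q = S.classOf x then b q else k (b q)
  have hbc : ∀ q q', S.rel (c q) (c q') = S.rel (b q) (b q') := fun q q' => by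
    by_cases hq : q = S.classOf x <;> by_cases hq' : q' = S.classOf x
    · simp only [c, if_pos hq, if_pos hq']
    · simp only [c, if_pos hq, if_neg hq']
      exact H.rel_apply_eq_of_mem_rowStab hs hk (by rw [hb, hb, hq]; exact Ne.symm hq')
    · simp only [c, if_neg hq, if_pos hq']
      rw [S.rel_swap, H.rel_apply_eq_of_mem_rowStab hs hk (by rw [hb, hb, hq']; exact Ne.symm hq),
        ← S.rel_swap]
    · simp only [c, if_neg hq, if_neg hq']
      exact S.rel_apply_apply hkaut _ _
  obtain ⟨g, hg, hgb⟩ := S.exists_mem_autGroup_of_rel_eq H.comm b c hb hbc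
  refine ⟨g, hg, by simpa [b, c] using hgb (S.classOf x), ?_⟩
  simpa [b, c, Ne.symm hxy] using hgb (S.classOf y)

theorem exists_mem_autGroup_of_mem {s : Set (X × X)} (hs : s ∈ S.rels) {x y x' y' : X}
    (hxy : (x, y) ∈ s) (hxy' : (x', y') ∈ s) : ∃ g ∈ S.autGroup, g x = x' ∧ g y = y' := by
  obtain ⟨g₁, hg₁, rfl⟩ := H.exists_mem_autGroup_apply_eq x x'
  have hg₁y : (g₁ x, g₁ y) ∈ s := hg₁ x y s hs hxy
  by_cases hthin : s ∈ S.thinRadical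
  · exact ⟨g₁, hg₁, rfl, S.eq_of_mem_thinRadical hthin hg₁y hxy'⟩
  obtain ⟨g₂, hg₂, hg₂x, hg₂y⟩ := H.exists_mem_autGroup_fix_apply_eq hs hthin hg₁y hxy'
  exact ⟨g₂ * g₁, mul_mem hg₂ hg₁, hg₂x, hg₂y⟩

end IsCommPSchemeOfThinIndex

end AssocScheme

/-- a commutative p-scheme of order `p^n` with thin radical of order
`p^(n-1)` is schurian. -/
theorem stmt9 {X : Type*} [Fintype X] (S : AssocScheme X) (p n : ℕ)
    (hp : S.IsPScheme p) (hcomm : S.IsCommutative)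
    (hcard : Fintype.card X = p ^ n)
    (hrad : S.nOrd S.thinRadical = p ^ (n - 1)) :
    S.IsSchurian := by
  have : Nonempty X := Fintype.card_pos_iff.mp (hcard ▸ pow_pos hp.1.pos n)
  have hval : ∀ s ∈ S.rels, S.val s ≠ 0 := fun s hs => by
    obtain ⟨i, hi⟩ := hp.2.2 s hs
    exact hi ▸ pow_ne_zero i hp.1.ne_zero
  refine S.isSchurian_of_exists_mem_autGroup (fun s hs => ?_) ?_
  · obtain ⟨y, hy⟩ := S.exists_mem_of_val_ne_zero hs (hval s hs) (Classical.arbitrary X)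
    exact ⟨_, hy⟩
  rcases n with _ | m
  · have : Subsingleton X := Fintype.card_le_one_iff_subsingleton.mp (by simp [hcard])
    exact fun _ _ _ _ _ _ _ _ => ⟨1, one_mem _, Subsingleton.elim _ _, Subsingleton.elim _ _⟩
  have hclasses : Nat.card S.Classes = p := by
    have h := S.card_eq_card_classes_mul
    rw [hcard, ← S.nOrd_thinRadical, hrad, Nat.add_sub_cancel, pow_succ'] at h
    exact (Nat.eq_of_mul_eq_mul_right (pow_pos hp.1.pos m) h).symm
  exact fun s hs _ _ _ _ => (⟨hp.1, hcomm, hp.2.2, hclasses⟩ :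
    S.IsCommPSchemeOfThinIndex p).exists_mem_autGroup_of_mem hs
end
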